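/- Transition probability to a boundary state with exhausted level-2 stock: suppose the demands D1 and D2 are independent ℕ-valued random variables with probability mass functions p1 and p2, and let j1 be a natural number with a01 < j1 ≤ s1 + a01 − a12 and j1 − a01 ≤ s2. Then the probability that the next state equals (j1, a02 + a12) is p1(s1 − a12 − (j1 − a01)) · (∑_{u ≥ s2} p2(u)) + (∑_{u ≥ s1 − a12 + (j1 − a01)} p1(u)) · p2(s2 − (j1 − a01)). -/
import Mathlib


/-- The product PMF of two PMFs on `ℕ`, giving the joint law of independent demands. -/
noncomputable def demandProdPMF (p1 p2 : PMF ℕ) : PMF (ℕ × ℕ) :=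
  p1.bind fun d1 => p2.map fun d2 => (d1, d2)

/-- The SA-MCD transition map sending a realized demand pair to the next state
(natural-number arithmetic, where subtraction is truncated, matching `max 0 ·`). -/
def samcdTransition (s1 s2 a01 a02 a12 : ℕ) : ℕ × ℕ → ℕ × ℕ := fun d =>
  let L1 := s1 + a01 - a12 - min (s1 - a12) d.1
  let L2 := s2 + a02 + a12 - min s2 d.2
  let B := min (d.1 - (s1 - a12)) (s2 - d.2)
  (L1 + B, L2 - B)

lemma demandProdPMF_apply (p1 p2 : PMF ℕ) (d1 d2 : ℕ) :
    demandProdPMF p1 p2 (d1, d2) = p1 d1 * p2 d2 := by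
  classical
  simp only [demandProdPMF, PMF.bind_apply, PMF.map_apply, Prod.mk.injEq]
  rw [tsum_eq_single d1]
  · rw [tsum_eq_single d2]
    · simp
    · intro b hb; simp [hb.symm]
  · intro a ha
    have : ∀ b : ℕ, (if d1 = a ∧ d2 = b then p2 b else 0) = 0 := by
      intro b
      rw [if_neg]
      rintro ⟨h, -⟩
      exact ha h.symm
    simp [this]

/-- Transition probability to a boundary state `(j1, a02 + a12)` with exhausted level-2
stock, for `a01 < j1 ≤ s1 + a01 − a12` and `j1 − a01 ≤ s2`: it equals
`p1 (s1 − a12 − (j1 − a01)) * (∑_{u ≥ s2} p2 u) +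
 (∑_{u ≥ s1 − a12 + (j1 − a01)} p1 u) * p2 (s2 − (j1 − a01))`. -/
theorem samcd_boundary_level2_transition_prob
    (M s1 s2 a01 a02 a12 : ℕ)
    (hstate : s1 + s2 ≤ M) (ha12le : a12 ≤ s1) (hact : a01 + a02 ≤ M - s1 - s2)
    (p1 p2 : PMF ℕ) (j1 : ℕ)
    (hj1l : a01 < j1) (hj1u : j1 ≤ s1 + a01 - a12) (hj1s2 : j1 - a01 ≤ s2) :
    ((demandProdPMF p1 p2).map (samcdTransition s1 s2 a01 a02 a12)) (j1, a02 + a12) =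
      p1 (s1 - a12 - (j1 - a01)) * (∑' u : ℕ, if s2 ≤ u then p2 u else 0) +
        (∑' u : ℕ, if s1 - a12 + (j1 - a01) ≤ u then p1 u else 0) *
          p2 (s2 - (j1 - a01)) := by
  classical
  set k := j1 - a01 with hk
  have key : ∀ d1 d2 : ℕ,
      ((j1, a02 + a12) = samcdTransition s1 s2 a01 a02 a12 (d1, d2)) ↔
      ((d1 = s1 - a12 - k ∧ s2 ≤ d2) ∨ (s1 - a12 + k ≤ d1 ∧ d2 = s2 - k)) := by
    intro d1 d2
    simp only [samcdTransition, Prod.mk.injEq]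
    omega
  rw [PMF.map_apply, ENNReal.tsum_prod']
  have step : ∀ d1 d2 : ℕ,
      (@ite _ ((j1, a02 + a12) = samcdTransition s1 s2 a01 a02 a12 (d1, d2))
        (Classical.propDecidable _) (demandProdPMF p1 p2 (d1, d2)) 0)
      = (if d1 = s1 - a12 - k then (if s2 ≤ d2 then p1 d1 * p2 d2 else 0) else 0)
        + (if d2 = s2 - k then (if s1 - a12 + k ≤ d1 then p1 d1 * p2 d2 else 0) else 0) := by
    intro d1 d2
    rw [demandProdPMF_apply]
    by_cases h : (j1, a02 + a12) = samcdTransition s1 s2 a01 a02 a12 (d1, d2)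
    · rw [if_pos h]
      rw [key] at h
      rcases h with ⟨h1, h2⟩ | ⟨h1, h2⟩
      · rw [if_pos h1, if_pos h2, if_neg (by omega), add_zero]
      · rw [if_pos h2, if_pos h1, if_neg (by omega), zero_add]
    · rw [if_neg h]
      rw [key] at h
      have h1 : ¬(d1 = s1 - a12 - k ∧ s2 ≤ d2) := fun hc => h (Or.inl hc)
      have h2 : ¬(s1 - a12 + k ≤ d1 ∧ d2 = s2 - k) := fun hc => h (Or.inr hc)
      split_ifs <;> first | rfl | omega | simp
  rw [tsum_congr fun d1 => tsum_congr fun d2 => step d1 d2]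
  rw [tsum_congr fun d1 => ENNReal.tsum_add, ENNReal.tsum_add]
  have e1 : (∑' d1 : ℕ, ∑' d2 : ℕ,
      if d1 = s1 - a12 - k then (if s2 ≤ d2 then p1 d1 * p2 d2 else 0) else 0)
      = p1 (s1 - a12 - k) * ∑' u : ℕ, if s2 ≤ u then p2 u else 0 := by
    rw [tsum_eq_single (s1 - a12 - k)]
    · rw [tsum_congr fun d2 : ℕ => if_pos rfl, ← ENNReal.tsum_mul_left]
      congr 1; funext d2; split_ifs <;> simp
    · intro b hb; simp [hb]
  have e2 : (∑' d1 : ℕ, ∑' d2 : ℕ,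
      if d2 = s2 - k then (if s1 - a12 + k ≤ d1 then p1 d1 * p2 d2 else 0) else 0)
      = (∑' u : ℕ, if s1 - a12 + k ≤ u then p1 u else 0) * p2 (s2 - k) := by
    have inner : ∀ d1 : ℕ, (∑' d2 : ℕ,
        if d2 = s2 - k then (if s1 - a12 + k ≤ d1 then p1 d1 * p2 d2 else 0) else 0)
        = (if s1 - a12 + k ≤ d1 then p1 d1 else 0) * p2 (s2 - k) := by
      intro d1
      rw [tsum_eq_single (s2 - k)]
      · rw [if_pos rfl]; split_ifs <;> simp
      · intro b hb; simp [hb]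
    simp only [inner]
    rw [ENNReal.tsum_mul_right]
  rw [e1, e2]
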